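/- arXiv:2511.07100 — 3 statements merged into one kernel-verified Lean document; each statement's English description precedes it below -/
import Mathlib

section
/- Let R: [N, ∞) → ℝ satisfy |R(x)| ≪ x/(log x)^{3/2+ε} with N > e^e, and T ≥ 1. Then ∫_N^∞ ∫_N^{x/2} (|R(x)R(y)|/(x y)²) · s²(2T log(x/y)) dy dx ≪ T^{−2} (log N)^{−1−2ε}, where s(u) = sin(u)/u. -/
open Filter MeasureTheory Set Real Topology

/-!
On the range `y ≤ x / 2` one has `log (x / y) ≥ 1 - y / x ≥ 1 / 2`, so the Fejér factor satisfies
`s²(2T log (x / y)) ≤ (2T log (x / y))⁻² ≤ T⁻²`. The integrand is then dominated by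
`C₀² T⁻² w(x) w(y)` with `w = logWeight (3 / 2 + ε)`, `w(z) = z⁻¹ (log z)^(-3/2-ε)`, so the double integral is at most
`C₀² T⁻² (∫_N^∞ w)²`, and `∫_N^∞ w = (log N)^(-1/2-ε) / (1/2 + ε)` since `w` is the derivative
of `(log z)^(-1/2-ε) / (-1/2-ε)`.
-/

noncomputable def logWeight (b x : ℝ) : ℝ := log x ^ (-b) / x

lemma logWeight_nonneg {b x : ℝ} (hx : 1 ≤ x) : 0 ≤ logWeight b x :=
  div_nonneg (rpow_nonneg (log_nonneg hx) _) (by linarith)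

lemma hasDerivAt_log_rpow_div {b x : ℝ} (hb : b ≠ 1) (hx : 1 < x) :
    HasDerivAt (fun t => log t ^ (1 - b) / (1 - b)) (logWeight b x) x := by
  refine (((hasDerivAt_log (zero_lt_one.trans hx).ne').rpow_const
    (p := 1 - b) (Or.inl (log_pos hx).ne')).div_const (1 - b)).congr_deriv ?_
  rw [logWeight, show 1 - b - 1 = -b by ring]
  field_simp [sub_ne_zero.2 hb.symm]

lemma tendsto_log_rpow_div_atTop {b : ℝ} (hb : 1 < b) :
    Tendsto (fun t => log t ^ (1 - b) / (1 - b)) atTop (𝓝 0) := by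
  have hpow := tendsto_rpow_neg_atTop (show 0 < b - 1 by linarith)
  rw [neg_sub] at hpow
  simpa using (hpow.comp tendsto_log_atTop).div_const (1 - b)

lemma integrableOn_logWeight_Ioi {b N : ℝ} (hb : 1 < b) (hN : 1 < N) :
    IntegrableOn (logWeight b) (Ioi N) :=
  integrableOn_Ioi_deriv_of_nonneg' (fun _ hx => hasDerivAt_log_rpow_div hb.ne' (hN.trans_le hx))
    (fun _ hx => logWeight_nonneg (hN.trans hx).le) (tendsto_log_rpow_div_atTop hb)

lemma integral_logWeight_Ioi {b N : ℝ} (hb : 1 < b) (hN : 1 < N) :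
    ∫ x in Ioi N, logWeight b x = log N ^ (1 - b) / (b - 1) := by
  rw [integral_Ioi_of_hasDerivAt_of_tendsto'
    (fun _ hx => hasDerivAt_log_rpow_div hb.ne' (hN.trans_le hx))
    (integrableOn_logWeight_Ioi hb hN) (tendsto_log_rpow_div_atTop hb),
    zero_sub, ← div_neg, neg_sub]

lemma setIntegral_setIntegral_le_mul_sq {α : Type*} [MeasurableSpace α] {μ : Measure α}
    {f : α → α → ℝ} {w : α → ℝ} {s : Set α} {t : α → Set α} {D : ℝ}
    (hs : MeasurableSet s) (ht : ∀ x, MeasurableSet (t x)) (hts : ∀ x, t x ⊆ s)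
    (hw : IntegrableOn w s μ) (hw0 : ∀ x ∈ s, 0 ≤ w x) (hD : 0 ≤ D)
    (hf0 : ∀ x ∈ s, ∀ y ∈ t x, 0 ≤ f x y) (hf : ∀ x ∈ s, ∀ y ∈ t x, f x y ≤ D * w x * w y) :
    ∫ x in s, ∫ y in t x, f x y ∂μ ∂μ ≤ D * (∫ x in s, w x ∂μ) ^ 2 := by
  set I := ∫ x in s, w x ∂μ
  have hinner : ∀ x ∈ s, ∫ y in t x, f x y ∂μ ≤ D * I * w x := fun x hx =>
    calc ∫ y in t x, f x y ∂μ ≤ ∫ y in t x, D * w x * w y ∂μ :=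
          integral_mono_of_nonneg ((ae_restrict_iff' (ht x)).2 (ae_of_all _ (hf0 x hx)))
            ((hw.mono_set (hts x)).const_mul _)
            ((ae_restrict_iff' (ht x)).2 (ae_of_all _ (hf x hx)))
      _ = D * w x * ∫ y in t x, w y ∂μ := integral_const_mul _ _
      _ ≤ D * w x * I := by
          have hwx := hw0 x hx
          gcongr
          exact setIntegral_mono_set hw ((ae_restrict_iff' hs).2 (ae_of_all _ hw0))
            (hts x).eventuallyLE
      _ = D * I * w x := by ring
  calc ∫ x in s, ∫ y in t x, f x y ∂μ ∂μ ≤ ∫ x in s, D * I * w x ∂μ :=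
        integral_mono_of_nonneg
          ((ae_restrict_iff' hs).2 (ae_of_all _ fun x hx => setIntegral_nonneg (ht x) (hf0 x hx)))
          (hw.const_mul _) ((ae_restrict_iff' hs).2 (ae_of_all _ hinner))
    _ = D * I ^ 2 := by rw [integral_const_mul]; ring

lemma sin_div_sq_le_inv_sq (u : ℝ) : (sin u / u) ^ 2 ≤ (u ^ 2)⁻¹ := by
  rw [div_pow, div_eq_mul_inv]
  exact mul_le_of_le_one_left (by positivity) (sin_sq_le_one u)

lemma half_le_log_div {x y : ℝ} (hy : 0 < y) (hxy : 2 * y ≤ x) : 1 / 2 ≤ log (x / y) := by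
  have hlog := one_sub_inv_le_log_of_pos (div_pos (by linarith) hy)
  have hyx : y / x ≤ 1 / 2 := by rw [div_le_iff₀ (by linarith)]; linarith
  rw [inv_div] at hlog
  linarith

lemma sin_div_sq_le_of_half_le {T v : ℝ} (hT : 0 < T) (hv : 1 / 2 ≤ v) :
    (sin (2 * T * v) / (2 * T * v)) ^ 2 ≤ 1 / T ^ 2 := by
  refine (sin_div_sq_le_inv_sq _).trans ?_
  rw [one_div]
  gcongr
  nlinarith

lemma abs_div_sq_le_mul_logWeight {b C₀ x r : ℝ} (hx : 1 < x)
    (hr : |r| ≤ C₀ * x / log x ^ b) : |r| / x ^ 2 ≤ C₀ * logWeight b x := by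
  have hlog : 0 < log x ^ b := rpow_pos_of_pos (log_pos hx) b
  calc |r| / x ^ 2 ≤ C₀ * x / log x ^ b / x ^ 2 := by gcongr
    _ = C₀ * logWeight b x := by
        rw [logWeight, rpow_neg (log_nonneg hx.le)]
        field_simp

lemma abs_mul_div_sq_mul_sin_div_sq_le {b C₀ N T x y : ℝ} {R : ℝ → ℝ} (hN : 1 < N)
    (hT : 0 < T) (hR : ∀ z, N ≤ z → |R z| ≤ C₀ * z / log z ^ b)
    (hx : N < x) (hy : y ∈ Ioc N (x / 2)) :
    |R x * R y| / (x * y) ^ 2 * (sin (2 * T * log (x / y)) / (2 * T * log (x / y))) ^ 2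
      ≤ C₀ ^ 2 / T ^ 2 * logWeight b x * logWeight b y := by
  have hRx := abs_div_sq_le_mul_logWeight (hN.trans hx) (hR x hx.le)
  have hRy := abs_div_sq_le_mul_logWeight (hN.trans hy.1) (hR y hy.1.le)
  have hRR : |R x * R y| / (x * y) ^ 2 ≤ C₀ * logWeight b x * (C₀ * logWeight b y) := by
    rw [abs_mul, mul_pow, mul_div_mul_comm]
    exact mul_le_mul hRx hRy (by positivity) ((by positivity : 0 ≤ |R x| / x ^ 2).trans hRx)
  have hlog : 1 / 2 ≤ log (x / y) :=
    half_le_log_div (by linarith [hy.1]) (by linarith [hy.2])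
  calc _ ≤ C₀ * logWeight b x * (C₀ * logWeight b y) * (1 / T ^ 2) :=
        mul_le_mul hRR (sin_div_sq_le_of_half_le hT hlog) (sq_nonneg _)
          ((by positivity : 0 ≤ |R x * R y| / (x * y) ^ 2).trans hRR)
    _ = C₀ ^ 2 / T ^ 2 * logWeight b x * logWeight b y := by ring

/-- the 'first range' Fejér-kernel estimate: if
`|R(x)| ≪ x/(log x)^(3/2+ε)` on `[N, ∞)` with `N > e^e` and `T ≥ 1`, then
`∫_N^∞ ∫_N^{x/2} (|R(x)R(y)|/(xy)²) s²(2T log(x/y)) dy dx ≪ T^{−2} (log N)^{−1−2ε}`. -/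
theorem stmt_9 (ε C₀ : ℝ) (hε : 0 < ε) (hC₀ : 0 < C₀) :
    ∃ C : ℝ, 0 < C ∧ ∀ N T : ℝ, Real.exp (Real.exp 1) < N → 1 ≤ T →
      ∀ R : ℝ → ℝ, (∀ x : ℝ, N ≤ x → |R x| ≤ C₀ * x / Real.log x ^ (3 / 2 + ε)) →
      (∫ x in Set.Ioi N, ∫ y in Set.Ioc N (x / 2),
          |R x * R y| / (x * y) ^ 2 *
            (Real.sin (2 * T * Real.log (x / y)) / (2 * T * Real.log (x / y))) ^ 2)
        ≤ C / T ^ 2 * Real.log N ^ (-(1 : ℝ) - 2 * ε) := by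
  have hb : 1 < 3 / 2 + ε := by linarith
  refine ⟨C₀ ^ 2 / (1 / 2 + ε) ^ 2, by positivity, fun N T hN hT R hR => ?_⟩
  have hN1 : 1 < N := (one_lt_exp_iff.2 (exp_pos 1)).trans hN
  have hT0 : 0 < T := by linarith
  calc _ ≤ C₀ ^ 2 / T ^ 2 * (∫ x in Ioi N, logWeight (3 / 2 + ε) x) ^ 2 :=
        setIntegral_setIntegral_le_mul_sq measurableSet_Ioi (fun _ => measurableSet_Ioc)
          (fun _ => Ioc_subset_Ioi_self) (integrableOn_logWeight_Ioi hb hN1)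
          (fun _ hx => logWeight_nonneg (hN1.trans hx).le) (by positivity)
          (fun _ _ _ _ => by positivity)
          (fun _ hx _ hy => abs_mul_div_sq_mul_sin_div_sq_le hN1 hT0 hR hx hy)
    _ = C₀ ^ 2 / (1 / 2 + ε) ^ 2 / T ^ 2 * log N ^ (-(1 : ℝ) - 2 * ε) := by
        rw [integral_logWeight_Ioi hb hN1, div_pow, ← rpow_mul_natCast (log_nonneg hN1.le)]
        ring_nf
end

section
/- Let b_j, c_j be sequences with |b_j| ≤ c_j and positive frequencies x_j strictly increasing, with ∑_j c_j²/x_j² < ∞. If the off-diagonal sum ∑_{x_j < x_k ≤ N} (c_j c_k)/(x_j x_k) |s(T log(x_k/x_j))| tends to 0 as N, T → ∞ with (log N)² = o(T), then lim (1/T)∫_0^T |∑_{x_j ≤ N} b_j x_j^{−1−it}|² dt = ∑_j b_j²/x_j² under the same joint limit. -/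
/-!
Expanding the square of `∑ b j x j^{-1-it}` and averaging over `[0, T]` gives the exact identity

  `(1/T) ∫₀ᵀ |∑ b j x j^{-1-it}|² dt`
  `  = ∑ b j²/x j² + 2 ∑_{j<k} b j b k/(x j x k) sinc (T log (x k/x j))`,

since the mean of `cos (α t)` over `[0, T]` is `sinc (T α)`. The diagonal converges to
`∑ b j²/x j²` as the truncation grows, and the cross term is bounded termwise by the dominating
off-diagonal sum of the `c j`, which tends to `0` by hypothesis.
-/

open Filter Asymptotics

open Complex ComplexConjugate in
theorem norm_sum_mul_exp_sq {ι : Type*} (F : Finset ι) (a ω : ι → ℝ) (t : ℝ) :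
    ‖∑ j ∈ F, (a j : ℂ) * exp (-(ω j * t * I))‖ ^ 2 =
      ∑ j ∈ F, ∑ k ∈ F, a j * a k * Real.cos ((ω k - ω j) * t) := by
  have h := congrArg re (mul_conj' (∑ j ∈ F, (a j : ℂ) * exp (-(ω j * t * I))))
  rw [← ofReal_pow, ofReal_re] at h
  rw [← h, map_sum, Finset.sum_mul_sum, re_sum]
  refine Finset.sum_congr rfl fun j _ => re_sum .. |>.trans <| Finset.sum_congr rfl fun k _ => ?_
  have hterm : (a j : ℂ) * exp (-(ω j * t * I)) * conj (a k * exp (-(ω k * t * I))) =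
      ((a j * a k : ℝ) : ℂ) * exp (((ω k - ω j) * t : ℝ) * I) := by
    rw [map_mul, conj_ofReal, ← exp_conj, mul_mul_mul_comm, ← exp_add]
    simp only [map_neg, map_mul, conj_ofReal, conj_I]
    push_cast
    ring_nf
  rw [hterm, re_ofReal_mul, exp_ofReal_mul_I_re]

theorem one_div_mul_integral_cos_mul {T : ℝ} (hT : T ≠ 0) (α : ℝ) :
    (1 / T) * ∫ t in (0:ℝ)..T, Real.cos (α * t) = Real.sinc (T * α) := by
  rcases eq_or_ne α 0 with rfl | hα
  · simp [hT]
  · rw [intervalIntegral.integral_comp_mul_left Real.cos hα, integral_cos,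
      Real.sinc_of_ne_zero (mul_ne_zero hT hα)]
    simp only [mul_zero, Real.sin_zero, sub_zero, smul_eq_mul]
    field_simp

open Complex in
theorem one_div_mul_integral_norm_sum_mul_exp_sq {ι : Type*} (F : Finset ι) (a ω : ι → ℝ)
    {T : ℝ} (hT : T ≠ 0) :
    (1 / T) * ∫ t in (0:ℝ)..T, ‖∑ j ∈ F, (a j : ℂ) * exp (-(ω j * t * I))‖ ^ 2 =
      ∑ j ∈ F, ∑ k ∈ F, a j * a k * Real.sinc (T * (ω k - ω j)) := by
  simp_rw [norm_sum_mul_exp_sq]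
  rw [intervalIntegral.integral_finsetSum fun j _ =>
    (by fun_prop : Continuous _).intervalIntegrable _ _, Finset.mul_sum]
  refine Finset.sum_congr rfl fun j _ => ?_
  rw [intervalIntegral.integral_finsetSum fun k _ =>
    (by fun_prop : Continuous _).intervalIntegrable _ _, Finset.mul_sum]
  refine Finset.sum_congr rfl fun k _ => ?_
  rw [intervalIntegral.integral_const_mul, ← one_div_mul_integral_cos_mul hT]
  ring

theorem Finset.sum_sum_eq_sum_add_two_mul_sum_sum_lt {ι R : Type*} [LinearOrder ι]
    [CommSemiring R] (F : Finset ι) (K : ι → ι → R) (hK : ∀ j k, K j k = K k j) :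
    ∑ j ∈ F, ∑ k ∈ F, K j k =
      ∑ j ∈ F, K j j + 2 * ∑ j ∈ F, ∑ k ∈ F, if j < k then K j k else 0 := by
  have hsplit : ∀ j k, K j k = (if j = k then K j k else 0) + (if j < k then K j k else 0) +
      (if k < j then K k j else 0) := by
    intro j k
    rcases lt_trichotomy j k with h | rfl | h
    · simp [h, h.ne, h.not_gt]
    · simp
    · simp [h, h.ne', h.not_gt, hK j k]
  rw [Finset.sum_congr rfl fun j _ => Finset.sum_congr rfl fun k _ => hsplit j k]
  simp only [Finset.sum_add_distrib, Finset.sum_ite_eq, two_mul]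
  rw [Finset.sum_comm (f := fun j k => if k < j then K k j else 0), add_assoc]
  congr 1
  exact Finset.sum_congr rfl fun j hj => if_pos hj

open Complex in
theorem ofReal_div_cpow_one_add_mul_I (b : ℝ) {x : ℝ} (hx : 0 < x) (t : ℝ) :
    (b : ℂ) / (x : ℂ) ^ (1 + t * I) = ((b / x : ℝ) : ℂ) * exp (-(Real.log x * t * I)) := by
  have hx' : (x : ℂ) ≠ 0 := ofReal_ne_zero.mpr hx.ne'
  rw [cpow_add _ _ hx', cpow_one, cpow_def_of_ne_zero hx', ← ofReal_log hx.le, exp_neg]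
  push_cast
  field_simp

theorem one_div_mul_integral_norm_sum_div_cpow_sq {ι : Type*} [LinearOrder ι] (F : Finset ι)
    (b x : ι → ℝ) (hx : ∀ j, 0 < x j) {T : ℝ} (hT : T ≠ 0) :
    (1 / T) * ∫ t in (0:ℝ)..T,
        ‖∑ j ∈ F, (b j : ℂ) / (x j : ℂ) ^ (1 + t * Complex.I)‖ ^ 2 =
      ∑ j ∈ F, b j ^ 2 / x j ^ 2 + 2 * ∑ j ∈ F, ∑ k ∈ F,
        if j < k then b j * b k / (x j * x k) * Real.sinc (T * Real.log (x k / x j)) else 0 := by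
  simp_rw [ofReal_div_cpow_one_add_mul_I _ (hx _)]
  rw [one_div_mul_integral_norm_sum_mul_exp_sq F _ _ hT,
    Finset.sum_sum_eq_sum_add_two_mul_sum_sum_lt]
  · congr 1
    · refine Finset.sum_congr rfl fun j _ => ?_
      rw [sub_self, mul_zero, Real.sinc_zero]
      ring
    · refine congrArg (2 * ·) <|
        Finset.sum_congr rfl fun j _ => Finset.sum_congr rfl fun k _ => ?_
      rw [Real.log_div (hx k).ne' (hx j).ne']
      congr 1
      ring
  · intro j k
    rw [← neg_sub, mul_neg, Real.sinc_neg]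
    ring

theorem finite_setOf_le_of_tendsto_atTop {x : ℕ → ℝ} (hx : Tendsto x atTop atTop) (y : ℝ) :
    {j | x j ≤ y}.Finite := by
  have h := hx.eventually_gt_atTop y
  rw [← Nat.cofinite_eq_atTop, eventually_cofinite] at h
  simpa using h

theorem tsum_ite_eq_sum_of_mem_iff {ι M : Type*} [AddCommMonoid M] [TopologicalSpace M]
    {F : Finset ι} {p : ι → Prop} [DecidablePred p] (hF : ∀ j, j ∈ F ↔ p j)
    (f : ι → M) :
    ∑' j, (if p j then f j else 0) = ∑ j ∈ F, f j := by
  rw [tsum_eq_sum fun j hj => if_neg fun h => hj ((hF j).2 h)]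
  exact Finset.sum_congr rfl fun j hj => if_pos ((hF j).1 hj)

theorem tsum_tsum_ite_lt_and_le_eq_sum_sum {ι M : Type*} [LinearOrder ι] [AddCommMonoid M]
    [TopologicalSpace M] {x : ι → ℝ} (hx : StrictMono x) {y : ℝ} {F : Finset ι}
    (hF : ∀ j, j ∈ F ↔ x j ≤ y) (g : ι → ι → M) :
    ∑' j, ∑' k, (if x j < x k ∧ x k ≤ y then g j k else 0) =
      ∑ j ∈ F, ∑ k ∈ F, if j < k then g j k else 0 := by
  have hinner : ∀ j, ∑' k, (if x j < x k ∧ x k ≤ y then g j k else 0) =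
      ∑' k, if x k ≤ y then (if j < k then g j k else 0) else 0 := fun j =>
    tsum_congr fun k => by by_cases h : x k ≤ y <;> simp [h, hx.lt_iff_lt]
  simp_rw [hinner, tsum_ite_eq_sum_of_mem_iff hF]
  refine tsum_eq_sum fun j hj => Finset.sum_eq_zero fun k hk => if_neg ?_
  exact (hx.lt_iff_lt.1 (((hF k).1 hk).trans_lt (not_le.1 (mt (hF j).2 hj)))).not_gt

theorem tendsto_atTop_of_mem_iff_le {x : ℕ → ℝ} (hx : Monotone x) {F : ℝ → Finset ℕ}
    (hF : ∀ y j, j ∈ F y ↔ x j ≤ y) : Tendsto F atTop atTop := by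
  refine tendsto_atTop.2 fun s => ?_
  obtain ⟨n, hn⟩ := s.exists_nat_subset_range
  filter_upwards [eventually_ge_atTop (x n)] with y hy j hj
  exact (hF y j).2 ((hx (Finset.mem_range.1 (hn hj)).le).trans hy)

theorem abs_mul_sinc_log_div_le {ι : Type*} [LinearOrder ι] {b c x : ι → ℝ} {j k : ι}
    (hx : StrictMono x) (hxpos : ∀ j, 0 < x j) (hbc : ∀ j, |b j| ≤ c j) {T : ℝ}
    (hT : T ≠ 0) (hjk : j < k) :
    |b j * b k / (x j * x k) * Real.sinc (T * Real.log (x k / x j))| ≤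
      c j * c k / (x j * x k) *
        |Real.sin (T * Real.log (x k / x j)) / (T * Real.log (x k / x j))| := by
  have hlog : Real.log (x k / x j) ≠ 0 :=
    (Real.log_pos ((one_lt_div (hxpos j)).2 (hx hjk))).ne'
  rw [Real.sinc_of_ne_zero (mul_ne_zero hT hlog), abs_mul, abs_div, abs_mul, abs_mul,
    abs_of_pos (hxpos j), abs_of_pos (hxpos k)]
  gcongr
  exacts [(mul_pos (hxpos j) (hxpos k)).le, (abs_nonneg _).trans (hbc j), hbc j, hbc k]

theorem abs_sum_sum_lt_mul_sinc_log_div_le {ι : Type*} [LinearOrder ι] {F : Finset ι}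
    {b c x : ι → ℝ} (hx : StrictMono x) (hxpos : ∀ j, 0 < x j) (hbc : ∀ j, |b j| ≤ c j)
    {T : ℝ} (hT : T ≠ 0) :
    |∑ j ∈ F, ∑ k ∈ F,
        if j < k then b j * b k / (x j * x k) * Real.sinc (T * Real.log (x k / x j)) else 0| ≤
      ∑ j ∈ F, ∑ k ∈ F, if j < k then c j * c k / (x j * x k) *
        |Real.sin (T * Real.log (x k / x j)) / (T * Real.log (x k / x j))| else 0 := by
  refine (Finset.abs_sum_le_sum_abs _ _).trans <| Finset.sum_le_sum fun j _ =>
    (Finset.abs_sum_le_sum_abs _ _).trans <| Finset.sum_le_sum fun k _ => ?_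
  split_ifs with hjk
  · exact abs_mul_sinc_log_div_le hx hxpos hbc hT hjk
  · simp

/-- domination principle. If `|b j| ≤ c j`, `∑ c j²/x j² < ∞`,
and the dominating off-diagonal sum
`∑_{x j < x k ≤ N} (c j c k)/(x j x k) |s(T log (x k/x j))|` tends to `0` as
`N, T → ∞` with `(log N)² = o(T)` (formalized via truncation functions `N(T)`),
then `(1/T)∫_0^T |∑_{x j ≤ N} b j x j^{−1−it}|² dt → ∑ b j²/x j²`
under the same joint limit. -/
theorem stmt_18
    (x b c : ℕ → ℝ)
    (hx : StrictMono x) (hxpos : ∀ j, 0 < x j) (hxt : Tendsto x atTop atTop)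
    (hbc : ∀ j, |b j| ≤ c j)
    (hsum : Summable (fun j => c j ^ 2 / x j ^ 2))
    (hoff : ∀ N : ℝ → ℝ, Tendsto N atTop atTop →
      (fun T : ℝ => Real.log (N T) ^ 2) =o[atTop] (fun T : ℝ => T) →
      Tendsto (fun T : ℝ =>
          ∑' j, ∑' k, if x j < x k ∧ x k ≤ N T then
            c j * c k / (x j * x k) *
              |Real.sin (T * Real.log (x k / x j)) / (T * Real.log (x k / x j))|
          else 0)
        atTop (nhds 0)) :
    ∀ N : ℝ → ℝ, Tendsto N atTop atTop →
      (fun T : ℝ => Real.log (N T) ^ 2) =o[atTop] (fun T : ℝ => T) →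
      Tendsto (fun T : ℝ => (1 / T) *
          ∫ t in (0:ℝ)..T,
            ‖∑' j, if x j ≤ N T then (b j : ℂ) / (x j : ℂ) ^ ((1 : ℂ) + t * Complex.I)
              else 0‖ ^ 2)
        atTop (nhds (∑' j, b j ^ 2 / x j ^ 2)) := by
  intro N hN hlog
  have hfin := finite_setOf_le_of_tendsto_atTop hxt
  set F : ℝ → Finset ℕ := fun y => (hfin y).toFinset
  have hF : ∀ y j, j ∈ F y ↔ x j ≤ y := fun y j => (hfin y).mem_toFinset
  have hb : Summable fun j => b j ^ 2 / x j ^ 2 :=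
    hsum.of_nonneg_of_le (fun j => by positivity) fun j =>
      div_le_div_of_nonneg_right (sq_le_sq.2 ((hbc j).trans (le_abs_self _))) (sq_nonneg _)
  have hdiag : Tendsto (fun T => ∑ j ∈ F (N T), b j ^ 2 / x j ^ 2) atTop
      (nhds (∑' j, b j ^ 2 / x j ^ 2)) :=
    hb.hasSum.comp ((tendsto_atTop_of_mem_iff_le hx.monotone hF).comp hN)
  have hcross : Tendsto (fun T => ∑ j ∈ F (N T), ∑ k ∈ F (N T), if j < k then
      b j * b k / (x j * x k) * Real.sinc (T * Real.log (x k / x j)) else 0) atTop (nhds 0) := by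
    refine squeeze_zero_norm' ?_ (hoff N hN hlog)
    filter_upwards [eventually_ne_atTop 0] with T hT
    rw [tsum_tsum_ite_lt_and_le_eq_sum_sum hx (hF (N T))]
    exact abs_sum_sum_lt_mul_sinc_log_div_le hx hxpos hbc hT
  have hlim := hdiag.add (hcross.const_mul 2)
  rw [mul_zero, add_zero] at hlim
  refine hlim.congr' ?_
  filter_upwards [eventually_ne_atTop 0] with T hT
  simp_rw [tsum_ite_eq_sum_of_mem_iff (hF (N T))]
  exact (one_div_mul_integral_norm_sum_div_cpow_sq _ b x hxpos hT).symm
end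

section
/- For N > e^e, n_0 ≥ e^e, and any sequence a_j > 0 with A(x) = ∑_{n_j ≤ x} a_j = ρx + O(x/(log x)^{3/2+ε}) (ρ, ε > 0), setting R_k = n_k/(log n_k)^{3/2+ε}: ∑_{n_0 < n_j < n_k ≤ N, n_j > n_k − R_k} (a_j a_k)/(n_j n_k) ≪ ∑_{n_k ≥ n_0} a_k/((n_k − R_k)(log n_k)^{3/2+ε}), and the right-hand side tends to 0 as n_0 → ∞. -/
/-!
For fixed `k`, the `j`-sum is at most `a k / ((n k - R k) n k)` times the mass
`A(n k) - A(n k - R k)` of the window `(n k - R k, n k]`. The asymptotic for `A`, taken at `x`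
and at `x - R x ≥ x / 2` (where `log` changes by a bounded factor), gives
`A(x) - A(x - R x) ≪ R x`, and `R k / ((n k - R k) n k) = 1 / ((n k - R k) (log n k)^b)`.
For the tail, `A(x) ≪ x` bounds the block `e^m ≤ n k < e^(m+1)` of the sum by `≪ m^(-b)`,
which is summable since `b = 3/2 + ε > 1`; dominated convergence then lets `n₀ → ∞`.
-/

open Filter Asymptotics

namespace NearDiagonal

open Real Finset

noncomputable def R (b x : ℝ) : ℝ := x / log x ^ b

section Elementary

variable {b x : ℝ}

lemma exp_one_le_log (hx : exp (exp 1) ≤ x) : exp 1 ≤ log x := by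
  rwa [le_log_iff_exp_le ((exp_pos _).trans_le hx)]

lemma two_le_log_rpow (hb : 1 ≤ b) (hx : exp (exp 1) ≤ x) : 2 ≤ log x ^ b := by
  calc (2 : ℝ) ≤ exp 1 := by linarith [add_one_le_exp (1 : ℝ)]
    _ ≤ log x := exp_one_le_log hx
    _ = log x ^ (1 : ℝ) := (rpow_one _).symm
    _ ≤ log x ^ b :=
        rpow_le_rpow_of_exponent_le (by linarith [exp_one_le_log hx, add_one_le_exp (1 : ℝ)]) hb

lemma R_nonneg (hb : 1 ≤ b) (hx : exp (exp 1) ≤ x) : 0 ≤ R b x :=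
  div_nonneg (by linarith [exp_pos (exp 1)]) (by linarith [two_le_log_rpow hb hx])

lemma half_le_sub_R (hb : 1 ≤ b) (hx : exp (exp 1) ≤ x) : x / 2 ≤ x - R b x := by
  have hR : R b x ≤ x / 2 :=
    div_le_div_of_nonneg_left (by linarith [exp_pos (exp 1)]) two_pos (two_le_log_rpow hb hx)
  linarith

lemma sub_R_pos (hb : 1 ≤ b) (hx : exp (exp 1) ≤ x) : 0 < x - R b x := by
  linarith [half_le_sub_R hb hx, exp_pos (exp 1)]

end Elementary

/-- The paper's `A(x)`. -/
noncomputable def summatory (n a : ℕ → ℝ) (x : ℝ) : ℝ := ∑' j, if n j ≤ x then a j else 0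

section Summatory

variable {n a : ℕ → ℝ}

lemma summable_ite_le (hnt : Tendsto n atTop atTop) (x : ℝ) :
    Summable fun j => if n j ≤ x then a j else 0 := by
  obtain ⟨K, hK⟩ := eventually_atTop.1 (hnt.eventually_gt_atTop x)
  refine summable_of_ne_finset_zero (s := range K) fun j hj => ?_
  rw [if_neg (hK j (by simpa using hj)).not_ge]

lemma summatory_nonneg (ha : ∀ j, 0 ≤ a j) (x : ℝ) : 0 ≤ summatory n a x :=
  tsum_nonneg fun j => by split_ifs <;> simp [ha j]

lemma sum_le_summatory (hnt : Tendsto n atTop atTop) (ha : ∀ j, 0 ≤ a j) {s : Finset ℕ}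
    {y : ℝ} (h : ∀ j ∈ s, n j ≤ y) : ∑ j ∈ s, a j ≤ summatory n a y := by
  calc ∑ j ∈ s, a j = ∑ j ∈ s, if n j ≤ y then a j else 0 :=
        sum_congr rfl fun j hj => (if_pos (h j hj)).symm
    _ ≤ summatory n a y :=
        (summable_ite_le hnt y).sum_le_tsum s fun j _ => by split_ifs <;> simp [ha j]

lemma summatory_mono (hnt : Tendsto n atTop atTop) (ha : ∀ j, 0 ≤ a j) {x y : ℝ}
    (hxy : x ≤ y) : summatory n a x ≤ summatory n a y :=
  (summable_ite_le hnt x).tsum_le_tsum (fun j => by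
    by_cases h : n j ≤ x
    · simp [h, h.trans hxy]
    · simp only [h, if_false]; split_ifs <;> simp [ha j]) (summable_ite_le hnt y)

lemma sum_le_summatory_sub (hnt : Tendsto n atTop atTop) (ha : ∀ j, 0 ≤ a j) {s : Finset ℕ}
    {x y : ℝ} (hxy : x ≤ y) (h : ∀ j ∈ s, x < n j ∧ n j ≤ y) :
    ∑ j ∈ s, a j ≤ summatory n a y - summatory n a x := by
  have hdiff : ∀ j, (if n j ≤ y then a j else 0) - (if n j ≤ x then a j else 0)
      = if x < n j ∧ n j ≤ y then a j else 0 := by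
    intro j
    by_cases hx : n j ≤ x
    · simp [hx, hx.trans hxy, not_lt.2 hx]
    · simp [hx, not_le.1 hx]
  rw [summatory, summatory, ← (summable_ite_le hnt y).tsum_sub (summable_ite_le hnt x)]
  simp_rw [hdiff]
  calc ∑ j ∈ s, a j = ∑ j ∈ s, if x < n j ∧ n j ≤ y then a j else 0 :=
        sum_congr rfl fun j hj => (if_pos (h j hj)).symm
    _ ≤ _ := ((summable_ite_le hnt y).sub (summable_ite_le hnt x)).congr hdiff |>.sum_le_tsum s
          fun j _ => by split_ifs <;> simp [ha j]

end Summatory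

section Asymptotics

variable {b : ℝ}

lemma R_isBigO_id (hb : 1 ≤ b) : R b =O[atTop] id := by
  refine IsBigO.of_bound 1 ?_
  filter_upwards [eventually_ge_atTop (exp (exp 1))] with x hx
  have hx0 : 0 ≤ x := (exp_pos _).le.trans hx
  rw [one_mul, norm_of_nonneg (R_nonneg hb hx), id, norm_of_nonneg hx0]
  exact div_le_self hx0 (by linarith [two_le_log_rpow hb hx])

lemma tendsto_sub_R (hb : 1 ≤ b) : Tendsto (fun x => x - R b x) atTop atTop :=
  tendsto_atTop_mono' atTop
    (by filter_upwards [eventually_ge_atTop (exp (exp 1))] with x hx using half_le_sub_R hb hx)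
    (tendsto_id.atTop_div_const two_pos)

lemma R_sub_R_isBigO (hb : 1 ≤ b) : (fun x => R b (x - R b x)) =O[atTop] R b := by
  refine IsBigO.of_bound (2 ^ b) ?_
  filter_upwards [eventually_ge_atTop (exp (exp 1))] with x hx
  set y := x - R b x
  have hy : x / 2 ≤ y := half_le_sub_R hb hx
  have hyx : y ≤ x := sub_le_self _ (R_nonneg hb hx)
  have hlogx : 2 ≤ log x := by linarith [exp_one_le_log hx, add_one_le_exp (1 : ℝ)]
  -- `log (x / 2) ≥ log x / 2` as soon as `log x ≥ 2 log 2`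
  have hlog : log x / 2 ≤ log y := by
    have h2 : log 2 < 1 := by linarith [log_two_lt_d9]
    have : log (x / 2) ≤ log y := log_le_log (by linarith [exp_pos (exp 1)]) hy
    rw [log_div (by linarith [exp_pos (exp 1)]) two_ne_zero] at this
    linarith
  have hLx : 0 < log x ^ b := by linarith [two_le_log_rpow hb hx]
  have hpow : log x ^ b / 2 ^ b ≤ log y ^ b := by
    rw [← div_rpow (by linarith) two_pos.le]
    exact rpow_le_rpow (by linarith) hlog (by linarith)
  have hRy : 0 ≤ R b y :=
    div_nonneg (by linarith [exp_pos (exp 1)]) (rpow_nonneg (by linarith) _)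
  rw [norm_of_nonneg hRy, norm_of_nonneg (R_nonneg hb hx)]
  calc R b y = y / log y ^ b := rfl
    _ ≤ x / (log x ^ b / 2 ^ b) :=
        div_le_div₀ (by linarith [exp_pos (exp 1)]) hyx (div_pos hLx (by positivity)) hpow
    _ = 2 ^ b * R b x := by rw [R]; field_simp

variable {n a : ℕ → ℝ} {ρ : ℝ}

lemma summatory_isBigO_id (hb : 1 ≤ b)
    (hA : (fun x => summatory n a x - ρ * x) =O[atTop] R b) : summatory n a =O[atTop] id :=
  ((hA.trans (R_isBigO_id hb)).add (isBigO_const_mul_self ρ id atTop)).congr_left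
    fun x => by simp

lemma summatory_sub_isBigO (hb : 1 ≤ b)
    (hA : (fun x => summatory n a x - ρ * x) =O[atTop] R b) :
    (fun x => summatory n a x - summatory n a (x - R b x)) =O[atTop] R b := by
  have hshift := (hA.comp_tendsto (tendsto_sub_R hb)).trans (R_sub_R_isBigO hb)
  refine ((hA.sub hshift).add (isBigO_const_mul_self ρ (R b) atTop)).congr_left fun x => ?_
  simp only [Function.comp]
  ring

lemma exists_summatory_sub_le (hb : 1 ≤ b) (hnt : Tendsto n atTop atTop) (ha : ∀ j, 0 ≤ a j)
    (hA : (fun x => summatory n a x - ρ * x) =O[atTop] R b) :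
    ∃ C, 0 < C ∧ ∀ x, exp (exp 1) ≤ x →
      summatory n a x - summatory n a (x - R b x) ≤ C * R b x := by
  obtain ⟨c, hc, hcbound⟩ := (summatory_sub_isBigO hb hA).exists_pos
  obtain ⟨X₀, hX₀⟩ := eventually_atTop.1 hcbound.bound
  set X := max X₀ (exp (exp 1))
  have hX : exp (exp 1) ≤ X := le_max_right _ _
  have hLX : 0 < log X ^ b := by linarith [two_le_log_rpow hb hX]
  -- below `X` the increment is at most `A X`, and `R b` is at least `exp (exp 1) / log X ^ b`
  set M := summatory n a X * log X ^ b / exp (exp 1) with hMdef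
  have hM : 0 ≤ M := by have := summatory_nonneg ha X (n := n); positivity
  refine ⟨c + M, by positivity, fun x hx => ?_⟩
  have hR : 0 ≤ R b x := R_nonneg hb hx
  rcases le_total X₀ x with hbig | hsmall
  · have h := hX₀ x hbig
    rw [norm_of_nonneg hR, Real.norm_eq_abs] at h
    calc summatory n a x - summatory n a (x - R b x) ≤ c * R b x := (le_abs_self _).trans h
      _ ≤ (c + M) * R b x := mul_le_mul_of_nonneg_right (le_add_of_nonneg_right hM) hR
  · have hxX : x ≤ X := hsmall.trans (le_max_left _ _)
    have hlow : exp (exp 1) / log X ^ b ≤ R b x := by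
      have hLx : 0 < log x ^ b := by linarith [two_le_log_rpow hb hx]
      refine div_le_div₀ ((exp_pos _).le.trans hx) hx hLx ?_
      exact rpow_le_rpow (by linarith [exp_one_le_log hx, exp_pos 1])
        (log_le_log ((exp_pos _).trans_le hx) hxX) (by linarith)
    calc summatory n a x - summatory n a (x - R b x) ≤ summatory n a X := by
          linarith [summatory_mono hnt ha hxX (n := n), summatory_nonneg ha (x - R b x) (n := n)]
      _ = M * (exp (exp 1) / log X ^ b) := by rw [hMdef]; field_simp
      _ ≤ M * R b x := mul_le_mul_of_nonneg_left hlow hM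
      _ ≤ (c + M) * R b x := mul_le_mul_of_nonneg_right (le_add_of_nonneg_left hc.le) hR

end Asymptotics

noncomputable def blockWeight (b : ℝ) (m : ℕ) : ℝ := 2 / (exp m * (m : ℝ) ^ b)

noncomputable def tailTerm (n a : ℕ → ℝ) (b n₀ : ℝ) (k : ℕ) : ℝ :=
  if n₀ ≤ n k then a k / ((n k - R b (n k)) * log (n k) ^ b) else 0

section Tail

variable {n a : ℕ → ℝ} {b n₀ : ℝ}

lemma tailTerm_nonneg (hb : 1 ≤ b) (ha : ∀ j, 0 ≤ a j) (hn₀ : exp (exp 1) ≤ n₀) (k : ℕ) :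
    0 ≤ tailTerm n a b n₀ k := by
  unfold tailTerm
  split_ifs with hk
  · have hx := hn₀.trans hk
    exact div_nonneg (ha k)
      (mul_nonneg (sub_R_pos hb hx).le (by linarith [two_le_log_rpow hb hx]))
  · exact le_rfl

lemma norm_tailTerm_le (hb : 1 ≤ b) (ha : ∀ j, 0 ≤ a j) (hn₀ : exp (exp 1) ≤ n₀) (k : ℕ) :
    ‖tailTerm n a b n₀ k‖ ≤ tailTerm n a b (exp (exp 1)) k := by
  rw [norm_of_nonneg (tailTerm_nonneg hb ha hn₀ k)]
  by_cases hk : n₀ ≤ n k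
  · rw [tailTerm, tailTerm, if_pos hk, if_pos (hn₀.trans hk)]
  · rw [tailTerm, if_neg hk]
    exact tailTerm_nonneg hb ha le_rfl k

lemma div_le_mul_blockWeight {a' x : ℝ} (hb : 1 ≤ b) (ha' : 0 ≤ a') (hx : exp (exp 1) ≤ x) :
    a' / ((x - R b x) * log x ^ b) ≤ a' * blockWeight b ⌊log x⌋₊ := by
  set m := ⌊log x⌋₊
  have hlog : 2 ≤ log x := by linarith [exp_one_le_log hx, add_one_le_exp (1 : ℝ)]
  have hm : (m : ℝ) ≤ log x := Nat.floor_le (by linarith)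
  have hm1 : (1 : ℝ) ≤ m := by exact_mod_cast (Nat.one_le_floor_iff _).2 (by linarith)
  have hexp : exp m ≤ x := (le_log_iff_exp_le ((exp_pos _).trans_le hx)).1 hm
  have hpow : (m : ℝ) ^ b ≤ log x ^ b := rpow_le_rpow (by linarith) hm (by linarith)
  have hE : 0 < exp m * (m : ℝ) ^ b / 2 := by positivity
  have hD : exp m * (m : ℝ) ^ b / 2 ≤ (x - R b x) * log x ^ b := by
    have := half_le_sub_R hb hx
    calc exp m * (m : ℝ) ^ b / 2 = (exp m / 2) * (m : ℝ) ^ b := by ring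
      _ ≤ (x - R b x) * log x ^ b :=
          mul_le_mul (by linarith) hpow (by positivity) (sub_R_pos hb hx).le
  rw [div_eq_mul_inv, blockWeight, ← inv_div]
  exact mul_le_mul_of_nonneg_left (inv_anti₀ hE hD) ha'

lemma summable_tailTerm (hb : 1 < b) (hnt : Tendsto n atTop atTop) (ha : ∀ j, 0 ≤ a j)
    (hA : summatory n a =O[atTop] id) (hn₀ : exp (exp 1) ≤ n₀) :
    Summable (tailTerm n a b n₀) := by
  classical
  -- the block `⌊log (n k)⌋₊ = m` of the sum is at most `G m ≪ m^(-b)`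
  set G : ℕ → ℝ := fun m => summatory n a (exp (m + 1)) * blockWeight b m
  have hG : Summable G := by
    have hexp : Tendsto (fun m : ℕ => exp ((m : ℝ) + 1)) atTop atTop :=
      tendsto_exp_atTop.comp (tendsto_atTop_add_const_right _ 1 tendsto_natCast_atTop_atTop)
    have hw : (fun m : ℕ => exp ((m : ℝ) + 1) * blockWeight b m)
        = fun m : ℕ => 2 * exp 1 * ((m : ℝ) ^ b)⁻¹ := by
      ext m
      simp only [blockWeight, exp_add]
      field_simp
    refine summable_of_isBigO_nat ((summable_nat_rpow_inv.2 hb).mul_left (2 * exp 1)) ?_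
    exact ((hA.comp_tendsto hexp).mul (isBigO_refl (blockWeight b) atTop)).trans_eventuallyEq
      (Eventually.of_forall fun m => congrFun hw m)
  refine summable_of_sum_le (c := ∑' m, G m) (tailTerm_nonneg hb.le ha hn₀) fun u => ?_
  set u' := u.filter fun k => n₀ ≤ n k
  have hu' : ∑ k ∈ u', tailTerm n a b n₀ k = ∑ k ∈ u, tailTerm n a b n₀ k :=
    sum_filter_of_ne fun k _ hk => by_contra fun h => hk (if_neg h)
  have hblock : ∀ m, ∑ k ∈ u' with ⌊log (n k)⌋₊ = m, tailTerm n a b n₀ k ≤ G m := by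
    intro m
    calc ∑ k ∈ u' with ⌊log (n k)⌋₊ = m, tailTerm n a b n₀ k
        ≤ ∑ k ∈ u' with ⌊log (n k)⌋₊ = m, a k * blockWeight b m := by
          refine sum_le_sum fun k hk => ?_
          simp only [u', mem_filter] at hk
          rw [tailTerm, if_pos hk.1.2, ← hk.2]
          exact div_le_mul_blockWeight hb.le (ha k) (hn₀.trans hk.1.2)
      _ = (∑ k ∈ u' with ⌊log (n k)⌋₊ = m, a k) * blockWeight b m := (sum_mul _ _ _).symm
      _ ≤ G m := by
          refine mul_le_mul_of_nonneg_right (sum_le_summatory hnt ha fun k hk => ?_)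
            (by unfold blockWeight; positivity)
          simp only [u', mem_filter] at hk
          have hk0 : 0 < n k := (exp_pos _).trans_le (hn₀.trans hk.1.2)
          rw [← exp_log hk0, exp_le_exp, ← hk.2]
          exact (Nat.lt_floor_add_one _).le
  have hG0 : ∀ m, 0 ≤ G m := fun m =>
    mul_nonneg (summatory_nonneg ha _) (by unfold blockWeight; positivity)
  calc ∑ k ∈ u, tailTerm n a b n₀ k
      = ∑ m ∈ u'.image (fun k => ⌊log (n k)⌋₊),
          ∑ k ∈ u' with ⌊log (n k)⌋₊ = m, tailTerm n a b n₀ k := by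
        rw [← hu', sum_fiberwise_of_maps_to fun k hk => mem_image_of_mem _ hk]
    _ ≤ ∑ m ∈ u'.image (fun k => ⌊log (n k)⌋₊), G m := sum_le_sum fun m _ => hblock m
    _ ≤ ∑' m, G m := hG.sum_le_tsum _ fun m _ => hG0 m

lemma tendsto_tsum_tailTerm (hb : 1 ≤ b) (ha : ∀ j, 0 ≤ a j)
    (hsum : Summable (tailTerm n a b (exp (exp 1)))) :
    Tendsto (fun n₀ => ∑' k, tailTerm n a b n₀ k) atTop (nhds 0) := by
  have hlim : ∀ k, Tendsto (fun n₀ => tailTerm n a b n₀ k) atTop (nhds 0) := fun k =>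
    tendsto_const_nhds.congr' <| by
      filter_upwards [eventually_gt_atTop (n k)] with n₀ h
      rw [tailTerm, if_neg (not_le.2 h)]
  simpa using tendsto_tsum_of_dominated_convergence hsum hlim <| by
    filter_upwards [eventually_ge_atTop (exp (exp 1))] with n₀ h using norm_tailTerm_le hb ha h

end Tail

noncomputable def nearTerm (n a : ℕ → ℝ) (b N n₀ : ℝ) (j k : ℕ) : ℝ :=
  if n₀ < n j ∧ n j < n k ∧ n k ≤ N ∧ n k - R b (n k) < n j then a j * a k / (n j * n k)
  else 0

section NearDiagonalSum

variable {n a : ℕ → ℝ} {b N n₀ C : ℝ}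

lemma nearTerm_le (hb : 1 ≤ b) (ha : ∀ j, 0 ≤ a j) (hk : exp (exp 1) ≤ n k) (j : ℕ) :
    nearTerm n a b N n₀ j k
      ≤ (if n k - R b (n k) < n j ∧ n j ≤ n k then a j else 0)
        * (a k / ((n k - R b (n k)) * n k)) := by
  have hR := sub_R_pos hb hk
  have hnk : 0 < n k := (exp_pos _).trans_le hk
  unfold nearTerm
  split_ifs with hnear hwin
  · rw [mul_div_assoc']
    exact div_le_div_of_nonneg_left (mul_nonneg (ha j) (ha k)) (by positivity)
      (mul_le_mul_of_nonneg_right hnear.2.2.2.le hnk.le)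
  · exact absurd ⟨hnear.2.2.2, hnear.2.1.le⟩ hwin
  · exact mul_nonneg (ha j) (div_nonneg (ha k) (mul_nonneg hR.le hnk.le))
  · simp

lemma sum_nearTerm_le (hb : 1 ≤ b) (hnt : Tendsto n atTop atTop) (ha : ∀ j, 0 ≤ a j)
    (hC : ∀ x, exp (exp 1) ≤ x → summatory n a x - summatory n a (x - R b x) ≤ C * R b x)
    (hn₀ : exp (exp 1) ≤ n₀) (s : Finset ℕ) (k : ℕ) :
    ∑ j ∈ s, nearTerm n a b N n₀ j k ≤ C * tailTerm n a b n₀ k := by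
  classical
  by_cases hk : n₀ ≤ n k
  swap
  · have hzero : ∀ j, nearTerm n a b N n₀ j k = 0 := fun j =>
      if_neg fun h => hk (h.1.trans h.2.1).le
    simp [hzero, tailTerm, hk]
  set x := n k
  have hx : exp (exp 1) ≤ x := hn₀.trans hk
  have hw : 0 ≤ a k / ((x - R b x) * x) :=
    div_nonneg (ha k) (mul_nonneg (sub_R_pos hb hx).le ((exp_pos _).le.trans hx))
  calc ∑ j ∈ s, nearTerm n a b N n₀ j k
      ≤ ∑ j ∈ s,
          (if x - R b x < n j ∧ n j ≤ x then a j else 0) * (a k / ((x - R b x) * x)) :=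
        sum_le_sum fun j _ => nearTerm_le hb ha hx j
    _ = (∑ j ∈ s with x - R b x < n j ∧ n j ≤ x, a j) * (a k / ((x - R b x) * x)) := by
        rw [← sum_mul, sum_filter]
    _ ≤ (summatory n a x - summatory n a (x - R b x)) * (a k / ((x - R b x) * x)) :=
        mul_le_mul_of_nonneg_right (sum_le_summatory_sub hnt ha
          (sub_le_self _ (R_nonneg hb hx)) fun j hj => (mem_filter.1 hj).2) hw
    _ ≤ C * R b x * (a k / ((x - R b x) * x)) := mul_le_mul_of_nonneg_right (hC x hx) hw
    _ = C * tailTerm n a b n₀ k := by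
        have hL : 0 < log x ^ b := by linarith [two_le_log_rpow hb hx]
        have := sub_R_pos hb hx
        have : 0 < x := (exp_pos _).trans_le hx
        rw [tailTerm, if_pos hk]
        change _ = C * (a k / ((x - R b x) * log x ^ b))
        rw [R]
        field_simp

lemma tsum_tsum_nearTerm_le (hb : 1 ≤ b) (hnt : Tendsto n atTop atTop) (ha : ∀ j, 0 ≤ a j)
    (hC₀ : 0 ≤ C)
    (hC : ∀ x, exp (exp 1) ≤ x → summatory n a x - summatory n a (x - R b x) ≤ C * R b x)
    (hn₀ : exp (exp 1) ≤ n₀) (hsum : Summable (tailTerm n a b n₀)) :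
    ∑' j, ∑' k, nearTerm n a b N n₀ j k ≤ C * ∑' k, tailTerm n a b n₀ k := by
  obtain ⟨K, hK⟩ := eventually_atTop.1 (hnt.eventually_gt_atTop N)
  have hvanish : ∀ j k, K ≤ j ∨ K ≤ k → nearTerm n a b N n₀ j k = 0 := by
    rintro j k (hj | hk) <;> refine if_neg fun h => ?_
    · linarith [hK j hj, h.2.1, h.2.2.1]
    · linarith [hK k hk, h.2.2.1]
  calc ∑' j, ∑' k, nearTerm n a b N n₀ j k
      = ∑ j ∈ range K, ∑ k ∈ range K, nearTerm n a b N n₀ j k := by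
        rw [tsum_eq_sum (s := range K) fun j hj =>
          by simp [hvanish j _ (.inl (by simpa using hj))]]
        exact sum_congr rfl fun j _ =>
          tsum_eq_sum fun k hk => hvanish j k (.inr (by simpa using hk))
    _ = ∑ k ∈ range K, ∑ j ∈ range K, nearTerm n a b N n₀ j k := sum_comm
    _ ≤ ∑ k ∈ range K, C * tailTerm n a b n₀ k :=
        sum_le_sum fun k _ => sum_nearTerm_le hb hnt ha hC hn₀ _ k
    _ ≤ C * ∑' k, tailTerm n a b n₀ k := by
        rw [← mul_sum]
        exact mul_le_mul_of_nonneg_left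
          (hsum.sum_le_tsum _ fun k _ => tailTerm_nonneg hb ha hn₀ k) hC₀

end NearDiagonalSum

end NearDiagonal

theorem stmt_19_general
    (n a : ℕ → ℝ) (ρ ε : ℝ)
    (hnt : Tendsto n atTop atTop)
    (ha : ∀ j, 0 < a j) (hε : 0 < ε)
    (hA : (fun x : ℝ => (∑' j, if n j ≤ x then a j else 0) - ρ * x)
      =O[atTop] (fun x : ℝ => x / Real.log x ^ (3 / 2 + ε))) :
    (∃ C : ℝ, 0 < C ∧ ∀ N n₀ : ℝ, Real.exp (Real.exp 1) < N →
        Real.exp (Real.exp 1) ≤ n₀ →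
        (∑' j, ∑' k, if n₀ < n j ∧ n j < n k ∧ n k ≤ N ∧
              n k - n k / Real.log (n k) ^ (3 / 2 + ε) < n j then
            a j * a k / (n j * n k) else 0)
          ≤ C * ∑' k, if n₀ ≤ n k then
              a k / ((n k - n k / Real.log (n k) ^ (3 / 2 + ε))
                * Real.log (n k) ^ (3 / 2 + ε)) else 0) ∧
    Tendsto (fun n₀ : ℝ =>
        ∑' k, if n₀ ≤ n k then
          a k / ((n k - n k / Real.log (n k) ^ (3 / 2 + ε))
            * Real.log (n k) ^ (3 / 2 + ε)) else 0)
      atTop (nhds 0) := by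
  have hb : 1 < 3 / 2 + ε := by linarith
  have ha' : ∀ j, 0 ≤ a j := fun j => (ha j).le
  have hA' := NearDiagonal.summatory_isBigO_id hb.le hA
  obtain ⟨C, hC, hinc⟩ := NearDiagonal.exists_summatory_sub_le hb.le hnt ha' hA
  refine ⟨⟨C, hC, fun N n₀ _ hn₀ => ?_⟩, ?_⟩
  · exact NearDiagonal.tsum_tsum_nearTerm_le hb.le hnt ha' hC.le hinc hn₀
      (NearDiagonal.summable_tailTerm hb hnt ha' hA' hn₀)
  · exact NearDiagonal.tendsto_tsum_tailTerm hb.le ha'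
      (NearDiagonal.summable_tailTerm hb hnt ha' hA' le_rfl)

/-- the 'near-diagonal' estimate. With
`A(x) = ∑_{n j ≤ x} a j = ρ x + O(x/(log x)^(3/2+ε))` and
`R k = n k / (log n k)^(3/2+ε)`, for `N > e^e` and `n₀ ≥ e^e`:
`∑_{n₀ < n j < n k ≤ N, n j > n k − R k} (a j a k)/(n j n k)
  ≪ ∑_{n k ≥ n₀} a k/((n k − R k)(log n k)^(3/2+ε))`, and the right-hand side
tends to `0` as `n₀ → ∞`. -/
theorem stmt_19
    (n a : ℕ → ℝ) (ρ ε : ℝ)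
    (hn : StrictMono n) (hn1 : 1 ≤ n 0) (hnt : Tendsto n atTop atTop)
    (ha : ∀ j, 0 < a j) (hρ : 0 < ρ) (hε : 0 < ε)
    (hA : (fun x : ℝ => (∑' j, if n j ≤ x then a j else 0) - ρ * x)
      =O[atTop] (fun x : ℝ => x / Real.log x ^ (3 / 2 + ε))) :
    (∃ C : ℝ, 0 < C ∧ ∀ N n₀ : ℝ, Real.exp (Real.exp 1) < N →
        Real.exp (Real.exp 1) ≤ n₀ →
        (∑' j, ∑' k, if n₀ < n j ∧ n j < n k ∧ n k ≤ N ∧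
              n k - n k / Real.log (n k) ^ (3 / 2 + ε) < n j then
            a j * a k / (n j * n k) else 0)
          ≤ C * ∑' k, if n₀ ≤ n k then
              a k / ((n k - n k / Real.log (n k) ^ (3 / 2 + ε))
                * Real.log (n k) ^ (3 / 2 + ε)) else 0) ∧
    Tendsto (fun n₀ : ℝ =>
        ∑' k, if n₀ ≤ n k then
          a k / ((n k - n k / Real.log (n k) ^ (3 / 2 + ε))
            * Real.log (n k) ^ (3 / 2 + ε)) else 0)
      atTop (nhds 0) :=
  stmt_19_general n a ρ ε hnt ha hε hA
end
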